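/- arXiv:2407.21206 — 3 statements merged into one kernel-verified Lean document; each statement's English description precedes it below -/
import Mathlib

section
/- For every integer m ≥ 2 and n = 2m-1, the edge set of the complete bipartite graph K_{m,n} can be covered by ⌈mn/(2m+n-1)⌉ = ⌈m/2⌉ (not necessarily edge-disjoint) spanning subgraphs, each of which is a double cycle on the m black vertices with one white vertex removed. -/
/-!
Label the black vertices by `ℤ/m` in cyclic order and attach the white vertices `2i, 2i + 1`
to the consecutive pair `(i, i + 1)`; with `2m - 1` white vertices this is a double cycle
minus one white vertex. Rotating it by `2k` for `0 ≤ k < ⌈m/2⌉` covers every edge: if the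
white vertex `w` sits on the pair starting at `i`, the edge `(b, w)` lies in the rotation by
`2⌊(b - i)/2⌋`, as the first or the second vertex of the pair according to the parity of
`b - i`. The ceiling identity holds because `2m + n - 1 = 2n`.
-/

open Sum

/-- A graph `G` on the vertex set `Fin m ⊕ Fin n` (black vertices `Fin m`, white vertices
`Fin n`) is a double cycle with one white vertex removed if there is a cyclic ordering of
the black vertices, given by a cyclic permutation `σ` of `Fin m` (a cycle on `2` black
vertices being allowed for `m = 2`), such that every white vertex is adjacent to exactly
one cyclically consecutive pair `(b, σ b)` of black vertices, every such pair having
exactly two common white neighbors except one distinguished pair `(b₀, σ b₀)` which has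
exactly one; there are no other edges. -/
def IsDoubleCycleMinusOneWhite (m n : ℕ) (G : SimpleGraph (Fin m ⊕ Fin n)) : Prop :=
  ∃ (σ : Equiv.Perm (Fin m)) (g : Fin n → Fin m) (b₀ : Fin m),
    σ.IsCycle ∧ σ.support = Finset.univ ∧
    (∀ b b' : Fin m, ¬ G.Adj (inl b) (inl b')) ∧
    (∀ w w' : Fin n, ¬ G.Adj (inr w) (inr w')) ∧
    (∀ (c : Fin m) (w : Fin n),
      G.Adj (inl c) (inr w) ↔ (c = g w ∨ c = σ (g w))) ∧
    (∀ b : Fin m,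
      (Finset.univ.filter (fun w : Fin n => g w = b)).card = if b = b₀ then 1 else 2)

open Finset Fin.NatCast

def pairGraph {m n : ℕ} (σ : Equiv.Perm (Fin m)) (g : Fin n → Fin m) :
    SimpleGraph (Fin m ⊕ Fin n) :=
  SimpleGraph.fromRel fun
    | inl c, inr w => c = g w ∨ c = σ (g w)
    | _, _ => False

section pairGraph

variable {m n : ℕ} (σ : Equiv.Perm (Fin m)) (g : Fin n → Fin m)

@[simp]
lemma pairGraph_adj_inl_inr (c : Fin m) (w : Fin n) :
    (pairGraph σ g).Adj (inl c) (inr w) ↔ c = g w ∨ c = σ (g w) := by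
  simp [pairGraph]

lemma pairGraph_not_adj_inl_inl (b b' : Fin m) : ¬ (pairGraph σ g).Adj (inl b) (inl b') := by
  simp [pairGraph]

lemma pairGraph_not_adj_inr_inr (w w' : Fin n) : ¬ (pairGraph σ g).Adj (inr w) (inr w') := by
  simp [pairGraph]

variable {σ g} in
lemma isDoubleCycleMinusOneWhite_pairGraph (b₀ : Fin m) (hσ : σ.IsCycle)
    (hσ_support : σ.support = univ) (hg : ∀ b, #{w | g w = b} = if b = b₀ then 1 else 2) :
    IsDoubleCycleMinusOneWhite m n (pairGraph σ g) :=
  ⟨σ, g, b₀, hσ, hσ_support, pairGraph_not_adj_inl_inl σ g, pairGraph_not_adj_inr_inr σ g,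
    pairGraph_adj_inl_inr σ g, hg⟩

end pairGraph

/-- White vertices `2i` and `2i + 1` go to the black pair `(i, i + 1)`; the missing white
vertex `2m - 1` leaves the pair `(m - 1, 0)` with a single one. -/
def halfIndex (m : ℕ) (w : Fin (2 * m - 1)) : Fin m :=
  ⟨w / 2, by omega⟩

lemma card_filter_halfIndex_eq {m : ℕ} (i : Fin m) :
    #{w | halfIndex m w = i} = if i.val + 1 = m then 1 else 2 := by
  split_ifs with hi
  · rw [card_eq_one]
    refine ⟨⟨2 * i, by omega⟩, ?_⟩
    ext w
    simp only [halfIndex, mem_filter, mem_univ, true_and, mem_singleton, Fin.ext_iff]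
    omega
  · rw [card_eq_two]
    refine ⟨⟨2 * i, by omega⟩, ⟨2 * i + 1, by omega⟩, by simp [Fin.ext_iff], ?_⟩
    ext w
    simp only [halfIndex, mem_filter, mem_univ, true_and, mem_insert, mem_singleton,
      Fin.ext_iff]
    omega

lemma card_filter_add_eq {m n : ℕ} [NeZero m] (h : Fin n → Fin m) (c b : Fin m) :
    #{w | h w + c = b} = #{w | h w = b - c} := by
  simp_rw [← eq_sub_iff_add_eq]

lemma isDoubleCycleMinusOneWhite_halfIndex_add {m : ℕ} [NeZero m] (hm : 2 ≤ m) (c : Fin m) :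
    IsDoubleCycleMinusOneWhite m (2 * m - 1)
      (pairGraph (finRotate m) fun w => halfIndex m w + c) := by
  refine isDoubleCycleMinusOneWhite_pairGraph (⟨m - 1, by omega⟩ + c)
    (isCycle_finRotate_of_le hm) (support_finRotate_of_le hm) fun b => ?_
  rw [card_filter_add_eq, card_filter_halfIndex_eq]
  refine if_congr ?_ rfl rfl
  rw [← sub_eq_iff_eq_add, Fin.ext_iff]
  dsimp only
  omega

lemma Fin.exists_eq_add_two_mul_or_eq_add_two_mul_add_one {m : ℕ} [NeZero m] (i b : Fin m) :
    ∃ k, 2 * k < m ∧ (b = i + ((2 * k : ℕ) : Fin m) ∨ b = i + ((2 * k : ℕ) : Fin m) + 1) := by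
  refine ⟨(b - i).val / 2, by omega, ?_⟩
  rcases Nat.even_or_odd' (b - i).val with ⟨k, hk | hk⟩
  · left
    rw [hk, Nat.mul_div_cancel_left _ two_pos, ← hk, Fin.cast_val_eq_self, add_sub_cancel]
  · right
    rw [hk, Nat.mul_add_div two_pos, Nat.div_eq_of_lt one_lt_two, add_zero, add_assoc,
      ← Nat.cast_add_one, ← hk, Fin.cast_val_eq_self, add_sub_cancel]

lemma lt_toNat_ceil_half {m k : ℕ} (h : 2 * k < m) : k < ⌈(m : ℚ) / 2⌉.toNat := by
  rw [Int.lt_toNat, Int.lt_ceil, lt_div_iff₀ two_pos]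
  exact_mod_cast (by omega : k * 2 < m)

/-- For every integer `m ≥ 2` and `n = 2m-1`, the edges of the complete bipartite graph
`K_{m,n}` can be covered by `⌈mn/(2m+n-1)⌉ = ⌈m/2⌉` (not necessarily edge-disjoint)
double cycles on the `m` black vertices with one white vertex removed. -/
theorem stmt_6 (m n : ℕ) (hm : 2 ≤ m) (hn : n = 2 * m - 1) :
    ⌈((m : ℚ) * n) / (2 * m + n - 1)⌉ = ⌈(m : ℚ) / 2⌉ ∧
    ∃ F : Fin (⌈(m : ℚ) / 2⌉.toNat) → SimpleGraph (Fin m ⊕ Fin n),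
      (∀ k, IsDoubleCycleMinusOneWhite m n (F k)) ∧
      ∀ (b : Fin m) (w : Fin n), ∃ k, (F k).Adj (inl b) (inr w) := by
  subst hn
  have : NeZero m := ⟨by omega⟩
  refine ⟨?_,
    fun k => pairGraph (finRotate m) fun w => halfIndex m w + ((2 * k.val : ℕ) : Fin m),
    fun k => isDoubleCycleMinusOneWhite_halfIndex_add hm _, fun b w => ?_⟩
  · have hn_cast : ((2 * m - 1 : ℕ) : ℚ) = 2 * m - 1 := by
      rw [Nat.cast_sub (by omega)]
      push_cast
      ring
    have hm_cast : (2 : ℚ) ≤ m := by exact_mod_cast hm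
    congr 1
    rw [hn_cast, div_eq_div_iff (by linarith) two_ne_zero]
    ring
  · obtain ⟨k, hk, hb⟩ := Fin.exists_eq_add_two_mul_or_eq_add_two_mul_add_one (halfIndex m w) b
    exact ⟨⟨k, lt_toNat_ceil_half hk⟩, by simpa [finRotate_apply] using hb⟩
end

section
/- For all integers m ≥ 3 and n ≥ 2m, setting ℓ = ⌈mn/(2m+n)⌉, there exist integers d_1, …, d_m such that d_i ≥ 4 for every i, d_1 + ⋯ + d_m = 2m + n, and for every starting index i, the sum of any ℓ cyclically consecutive values d_{i+1} + d_{i+2} + ⋯ + d_{i+ℓ} (indices taken modulo m) is at least n. -/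
/-!
Take `d` to be the gap sequence `d j = ⌊(j + 1) α⌋ - ⌊j α⌋` of the Beatty sequence of slope
`α = (2m + n) / m ≥ 4`. Since `m α` is an integer, `d` is `m`-periodic and its period sums to
`⌊m α⌋ = 2m + n`. By superadditivity of the floor, any `ℓ` consecutive gaps sum to at least
`⌊ℓ α⌋`, and `ℓ α ≥ n` exactly because `ℓ ≥ mn / (2m + n)`.
-/

section BeattyGap

variable {K : Type*} [Ring K] [LinearOrder K] [FloorRing K]

def beattyGap (α : K) (j : ℕ) : ℤ := ⌊((j + 1 : ℕ) : K) * α⌋ - ⌊(j : K) * α⌋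

theorem sum_range_beattyGap (α : K) (i k : ℕ) :
    ∑ j ∈ Finset.range k, beattyGap α (i + j) = ⌊((i + k : ℕ) : K) * α⌋ - ⌊(i : K) * α⌋ := by
  simpa [beattyGap, add_assoc] using
    Finset.sum_range_sub (fun j => ⌊((i + j : ℕ) : K) * α⌋) k

theorem floor_mul_le_sum_range_beattyGap [IsOrderedRing K] (α : K) (i k : ℕ) :
    ⌊(k : K) * α⌋ ≤ ∑ j ∈ Finset.range k, beattyGap α (i + j) := by
  have := Int.le_floor_add ((i : K) * α) ((k : K) * α)
  rw [sum_range_beattyGap, Nat.cast_add, add_mul]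
  omega

theorem floor_le_beattyGap [IsOrderedRing K] (α : K) (i : ℕ) : ⌊α⌋ ≤ beattyGap α i := by
  simpa using floor_mul_le_sum_range_beattyGap α i 1

theorem sum_range_beattyGap_eq_floor [IsOrderedRing K] (α : K) (k : ℕ) :
    ∑ j ∈ Finset.range k, beattyGap α j = ⌊(k : K) * α⌋ := by
  simpa using sum_range_beattyGap α 0 k

theorem beattyGap_add_of_mul_eq_intCast [IsOrderedRing K] {α : K} {p : ℕ} {N : ℤ}
    (h : (p : K) * α = N) (i : ℕ) :
    beattyGap α (i + p) = beattyGap α i := by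
  simp only [beattyGap, show i + p + 1 = i + 1 + p by omega, Nat.cast_add, add_mul, h,
    Int.floor_add_intCast]
  ring

end BeattyGap

theorem le_ceil_div_toNat_mul {K : Type*} [Field K] [LinearOrder K] [IsStrictOrderedRing K]
    [FloorRing K] {a b : K} (ha : 0 ≤ a) (hb : 0 < b) : a ≤ (⌈a / b⌉.toNat : K) * b := by
  have hceil : (0 : ℤ) ≤ ⌈a / b⌉ := Int.ceil_nonneg (div_nonneg ha hb.le)
  rw [← div_le_iff₀ hb]
  calc a / b ≤ ⌈a / b⌉ := Int.le_ceil _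
    _ = (⌈a / b⌉.toNat : K) := by exact_mod_cast (Int.toNat_of_nonneg hceil).symm

/-- For integers `m ≥ 3` and `n ≥ 2m`, setting `ℓ = ⌈mn/(2m+n)⌉`, there exist integers
`d_1, …, d_m` (encoded as an `m`-periodic function `d : ℕ → ℤ`) with `d_i ≥ 4` for every
`i`, `d_1 + ⋯ + d_m = 2m + n`, and such that every sum of `ℓ` cyclically consecutive
values `d_{i+1} + ⋯ + d_{i+ℓ}` is at least `n`. -/
theorem stmt_7 (m n : ℕ) (hm : 3 ≤ m) (hn : 2 * m ≤ n) :
    ∃ d : ℕ → ℤ,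
      (∀ i, d (i + m) = d i) ∧
      (∀ i, 4 ≤ d i) ∧
      (∑ i ∈ Finset.range m, d i) = 2 * m + n ∧
      ∀ i : ℕ,
        (n : ℤ) ≤ ∑ j ∈ Finset.range (⌈((m : ℚ) * n) / (2 * m + n)⌉.toNat), d (i + 1 + j) := by
  have hm0 : (0 : ℚ) < m := by exact_mod_cast (by omega : 0 < m)
  have hn' : (2 * m : ℚ) ≤ n := by exact_mod_cast hn
  set α : ℚ := (2 * m + n) / m
  have hperiod : (m : ℚ) * α = ((2 * m + n : ℤ) : ℚ) := by
    push_cast; exact mul_div_cancel₀ _ hm0.ne'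
  refine ⟨beattyGap α, beattyGap_add_of_mul_eq_intCast hperiod, fun i => ?_, ?_, fun i => ?_⟩
  · refine le_trans ?_ (floor_le_beattyGap α i)
    rw [Int.le_floor, le_div_iff₀ hm0]
    push_cast
    linarith
  · rw [sum_range_beattyGap_eq_floor, hperiod, Int.floor_intCast]
  · refine le_trans ?_ (floor_mul_le_sum_range_beattyGap α (i + 1) _)
    have hceil := le_ceil_div_toNat_mul (a := (m : ℚ) * n) (b := 2 * m + n) (by positivity)
      (by positivity)
    rw [Int.le_floor, Int.cast_natCast, ← mul_div_assoc, le_div_iff₀ hm0]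
    linarith
end

section
/- Let n, m, e, f be real numbers satisfying n − e + f = 2 and e·(2e − 3f) ≥ m − e. Then (3n−5)² ≥ 4m and e ≤ (3n−5 + √((3n−5)² − 4m))/2. -/
/-!
Eliminating `f` through Euler's formula turns the face-counting inequality into the quadratic
inequality `e² - (3n-5)e + m ≤ 0`, so `e` lies below the larger root of `X² - (3n-5)X + m`.
-/

namespace Real

theorem sq_two_mul_sub_le_of_sq_sub_mul_add_nonpos {x b c : ℝ} (h : x ^ 2 - b * x + c ≤ 0) :
    (2 * x - b) ^ 2 ≤ b ^ 2 - 4 * c := by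
  linarith [show (2 * x - b) ^ 2 = b ^ 2 - 4 * c + 4 * (x ^ 2 - b * x + c) by ring]

theorem four_mul_le_sq_of_sq_sub_mul_add_nonpos {x b c : ℝ} (h : x ^ 2 - b * x + c ≤ 0) :
    4 * c ≤ b ^ 2 := by
  linarith [sq_two_mul_sub_le_of_sq_sub_mul_add_nonpos h, sq_nonneg (2 * x - b)]

theorem le_larger_root_of_sq_sub_mul_add_nonpos {x b c : ℝ} (h : x ^ 2 - b * x + c ≤ 0) :
    x ≤ (b + √(b ^ 2 - 4 * c)) / 2 := by
  have hroot : |2 * x - b| ≤ √(b ^ 2 - 4 * c) :=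
    abs_le_sqrt (sq_two_mul_sub_le_of_sq_sub_mul_add_nonpos h)
  linarith [le_abs_self (2 * x - b)]

end Real

/-- If real numbers `n, m, e, f` satisfy Euler's formula `n - e + f = 2` and the
face-counting inequality `e(2e - 3f) ≥ m - e`, then `(3n-5)² ≥ 4m` and
`e ≤ (3n-5 + √((3n-5)² - 4m))/2`. -/
theorem stmt_9 (n m e f : ℝ) (h1 : n - e + f = 2) (h2 : m - e ≤ e * (2 * e - 3 * f)) :
    4 * m ≤ (3 * n - 5) ^ 2 ∧
    e ≤ (3 * n - 5 + Real.sqrt ((3 * n - 5) ^ 2 - 4 * m)) / 2 := by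
  have hquad : e ^ 2 - (3 * n - 5) * e + m ≤ 0 := by
    obtain rfl : f = 2 - n + e := by linarith
    linarith
  exact ⟨Real.four_mul_le_sq_of_sq_sub_mul_add_nonpos hquad,
    Real.le_larger_root_of_sq_sub_mul_add_nonpos hquad⟩
end
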